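/- Let m ≥ 1 be an integer and let p be a prime. Write k = ⌊p/(m+1)⌋ and l = p mod (m+1), so p = (m+1)·k + l with 0 ≤ l ≤ m. Then in 𝔽_p[x,y] the following identity holds between the images of the polynomials ξ_m, ξ_{m+1} under the coefficient ring map ℤ → 𝔽_p: ξ_{m+1}^p + (−1)^p·x^{m·p}·(1 − y)^{(m+1)·p} = Σ_{i=0}^{k} C(k,i)·(−1)^i·ξ_{m+1}^{k−i}·(x·(1 − y)·ξ_m)^i·(1 − x·y)^l·ξ_m^p. -/

import Mathlib

/-!
Write `x = X 0`, `y = X 1`. Summing the geometric series in `x` inside `ξ_m` gives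
`(1 - x) ξ_m = (1 - x y)^(m+1) - x^m (1 - y)^(m+1)`, and hence the two recursions
`ξ_{m+1} = (1 - x y) ξ_m + x^m (1 - y)^(m+1) = x (1 - y) ξ_m + (1 - x y)^(m+1)`.
In characteristic `p` the first one and the Frobenius turn the left-hand side into
`((1 - x y) ξ_m)^p`. By the binomial theorem and the second one the right-hand side is
`(ξ_{m+1} - x (1 - y) ξ_m)^k (1 - x y)^l ξ_m^p = (1 - x y)^((m+1) k + l) ξ_m^p`,
which is the same since `(m+1) k + l = p`.
-/

open MvPolynomial Finset

/-- The polynomial `ξ_m ∈ ℤ[x,y]`, where `X 0` plays the role of `x` and `X 1` of `y`: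
`ξ_m = (−1)^m x^m y^(m+1) + Σ_{j=0}^{m−1} Σ_{i=j}^{m−1} (−1)^j C(m+1,j) x^i y^j`. -/
noncomputable def xi (m : ℕ) : MvPolynomial (Fin 2) ℤ :=
  (-1) ^ m * X 0 ^ m * X 1 ^ (m + 1) +
    ∑ j ∈ Finset.range m, ∑ i ∈ Finset.Icc j (m - 1),
      (-1) ^ j * ((m + 1).choose j : MvPolynomial (Fin 2) ℤ) * X 0 ^ i * X 1 ^ j

theorem one_sub_pow_eq_sum {R : Type*} [CommRing R] (a : R) (n : ℕ) :
    (1 - a) ^ n = ∑ j ∈ range (n + 1), (-1) ^ j * (n.choose j : R) * a ^ j := by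
  rw [sub_eq_neg_add, add_pow]
  refine sum_congr rfl fun j _ => ?_
  rw [neg_pow, one_pow]
  ring

theorem one_sub_X_ne_zero {σ R : Type*} [CommRing R] [Nontrivial R] (i : σ) :
    (1 - X i : MvPolynomial σ R) ≠ 0 := fun h => by
  simpa using congrArg constantCoeff h

theorem one_sub_X_mul_xi (m : ℕ) :
    (1 - X 0) * xi m = (1 - X 0 * X 1) ^ (m + 1) - X 0 ^ m * (1 - X 1) ^ (m + 1) := by
  set x : MvPolynomial (Fin 2) ℤ := X 0
  set y : MvPolynomial (Fin 2) ℤ := X 1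
  set c : ℕ → MvPolynomial (Fin 2) ℤ := fun j => (-1) ^ j * ((m + 1).choose j : _) * y ^ j
  have inner : ∀ j ∈ range m,
      (1 - x) * ∑ i ∈ Icc j (m - 1), (-1) ^ j * ((m + 1).choose j : MvPolynomial (Fin 2) ℤ) *
        x ^ i * y ^ j = c j * (x ^ j - x ^ m) := by
    intro j hj
    have hjm : j < m := mem_range.1 hj
    rw [Icc_sub_one_right_eq_Ico_of_not_isMin (by simp; omega), ← geom_sum_Ico_mul_neg x hjm.le,
      mul_sum, sum_mul, mul_sum]
    refine sum_congr rfl fun i _ => ?_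
    ring
  have binomial : (1 - x * y) ^ (m + 1) - x ^ m * (1 - y) ^ (m + 1)
      = ∑ j ∈ range (m + 2), c j * (x ^ j - x ^ m) := by
    rw [one_sub_pow_eq_sum, one_sub_pow_eq_sum, mul_sum, ← sum_sub_distrib]
    refine sum_congr rfl fun j _ => ?_
    ring
  rw [binomial, sum_range_succ, sum_range_succ, xi, mul_add, mul_sum, sum_congr rfl inner]
  simp only [c, sub_self, mul_zero, add_zero, Nat.choose_self, Nat.cast_one]
  ring

theorem xi_succ_eq_mul_add_X_pow (m : ℕ) :
    xi (m + 1) = (1 - X 0 * X 1) * xi m + X 0 ^ m * (1 - X 1) ^ (m + 1) := by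
  refine mul_left_cancel₀ (one_sub_X_ne_zero 0) ?_
  linear_combination one_sub_X_mul_xi (m + 1) - (1 - X 0 * X 1) * one_sub_X_mul_xi m

theorem xi_succ_eq_mul_add_one_sub_pow (m : ℕ) :
    xi (m + 1) = X 0 * (1 - X 1) * xi m + (1 - X 0 * X 1) ^ (m + 1) := by
  refine mul_left_cancel₀ (one_sub_X_ne_zero 0) ?_
  linear_combination one_sub_X_mul_xi (m + 1) - X 0 * (1 - X 1) * one_sub_X_mul_xi m

theorem sum_choose_sub_mul_pow_mod_eq_mul_pow {R : Type*} [CommRing R] (n : ℕ) {m : ℕ}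
    {u a b c : R} (h : b = c + u ^ (m + 1)) :
    ∑ i ∈ range (n / (m + 1) + 1), ((n / (m + 1)).choose i : R) * (-1) ^ i *
        b ^ (n / (m + 1) - i) * c ^ i * u ^ (n % (m + 1)) * a ^ n
      = (u * a) ^ n := by
  have binomial : ∑ i ∈ range (n / (m + 1) + 1), ((n / (m + 1)).choose i : R) * (-1) ^ i *
        b ^ (n / (m + 1) - i) * c ^ i = (u ^ (m + 1)) ^ (n / (m + 1)) := by
    rw [eq_sub_of_add_eq' h.symm, sub_eq_neg_add, add_pow]
    refine sum_congr rfl fun i _ => ?_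
    rw [neg_pow]
    ring
  calc _ = (u ^ (m + 1)) ^ (n / (m + 1)) * u ^ (n % (m + 1)) * a ^ n := by
        rw [← binomial, sum_mul, sum_mul]
    _ = (u * a) ^ n := by
        rw [← pow_mul, ← pow_add, Nat.div_add_mod, mul_pow]

theorem pow_add_neg_one_pow_mul_eq_mul_pow {R : Type*} [CommRing R] (p : ℕ) [Fact p.Prime]
    [CharP R p] {m : ℕ} {x v u a b : R} (h : b = u * a + x ^ m * v ^ (m + 1)) :
    b ^ p + (-1) ^ p * x ^ (m * p) * v ^ ((m + 1) * p) = (u * a) ^ p := by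
  rw [eq_sub_of_add_eq h.symm, sub_pow_char, neg_one_pow_char, mul_pow, pow_mul', pow_mul']
  ring

theorem stmt_8_general (m : ℕ) (p : ℕ) (hp : p.Prime) :
    letI k := p / (m + 1)
    letI l := p % (m + 1)
    letI Ξ : ℕ → MvPolynomial (Fin 2) (ZMod p) :=
      fun n => MvPolynomial.map (Int.castRingHom (ZMod p)) (xi n)
    Ξ (m + 1) ^ p + (-1) ^ p * X 0 ^ (m * p) * (1 - X 1) ^ ((m + 1) * p) =
      ∑ i ∈ Finset.range (k + 1),
        (k.choose i : MvPolynomial (Fin 2) (ZMod p)) * (-1) ^ i * Ξ (m + 1) ^ (k - i) *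
          (X 0 * (1 - X 1) * Ξ m) ^ i * (1 - X 0 * X 1) ^ l * Ξ m ^ p := by
  have := Fact.mk hp
  have h₁ := congrArg (map (Int.castRingHom (ZMod p))) (xi_succ_eq_mul_add_X_pow m)
  have h₂ := congrArg (map (Int.castRingHom (ZMod p))) (xi_succ_eq_mul_add_one_sub_pow m)
  simp only [map_add, map_mul, map_pow, map_sub, map_one, map_X] at h₁ h₂
  rw [pow_add_neg_one_pow_mul_eq_mul_pow p h₁, sum_choose_sub_mul_pow_mod_eq_mul_pow p h₂]

theorem stmt_8 (m : ℕ) (hm : 1 ≤ m) (p : ℕ) (hp : p.Prime) :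
    letI k := p / (m + 1)
    letI l := p % (m + 1)
    letI Ξ : ℕ → MvPolynomial (Fin 2) (ZMod p) :=
      fun n => MvPolynomial.map (Int.castRingHom (ZMod p)) (xi n)
    Ξ (m + 1) ^ p + (-1) ^ p * X 0 ^ (m * p) * (1 - X 1) ^ ((m + 1) * p) =
      ∑ i ∈ Finset.range (k + 1),
        (k.choose i : MvPolynomial (Fin 2) (ZMod p)) * (-1) ^ i * Ξ (m + 1) ^ (k - i) *
          (X 0 * (1 - X 1) * Ξ m) ^ i * (1 - X 0 * X 1) ^ l * Ξ m ^ p :=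
  stmt_8_general m p hp
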